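/- arXiv:2602.15571 — 8 statements merged into one kernel-verified Lean document; each statement's English description precedes it below -/
import Mathlib

section
/- In a forward-initialized predictive coding network (as defined in the context), for every hidden layer ℓ with 1 ≤ ℓ ≤ L−1 and every time step t with 0 ≤ t < L−ℓ, the prediction error vanishes, ε_ℓ(t) = 0, and the neural activity is unchanged from its initial value, φ_ℓ(t) = φ_ℓ(0). Consequently, layer ℓ requires at least L−ℓ inference-phase steps before its activity can deviate from equilibrium. -/
/-!
STATEMENT 0: Error propagation delay in a forward-initialized predictive coding network.

The network has `L + 1 = (N + 2) + 1` layers (so the depth `L = N + 2` ranges over all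
naturals with `L ≥ 2`).  For every hidden layer `ℓ` with `1 ≤ ℓ ≤ L − 1` and every time
step `t < L − ℓ`, the prediction error vanishes, `ε_ℓ(t) = 0`, and the neural activity is
unchanged from its initial value, `φ_ℓ(t) = φ_ℓ(0)`.
-/
theorem error_propagation_delay
    (N : ℕ)                                  -- network depth L = N + 2 (covers all L ≥ 2)
    (d : ℕ → ℕ)                              -- layer dimensions
    -- prediction maps g_ℓ : ℝ^{d_ℓ} → ℝ^{d_{ℓ+1}}
    (g : ∀ ℓ : ℕ, EuclideanSpace ℝ (Fin (d ℓ)) → EuclideanSpace ℝ (Fin (d (ℓ + 1))))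
    -- Jacobian of g_ℓ at each point, as a continuous linear map
    (J : ∀ ℓ : ℕ, EuclideanSpace ℝ (Fin (d ℓ)) →
      (EuclideanSpace ℝ (Fin (d ℓ)) →L[ℝ] EuclideanSpace ℝ (Fin (d (ℓ + 1)))))
    (hJ : ∀ ℓ x, HasFDerivAt (g ℓ) (J ℓ x) x)
    (γ : ℝ) (hγ : 0 < γ)                     -- neural activity learning rate
    (φ : ℕ → ∀ ℓ : ℕ, EuclideanSpace ℝ (Fin (d ℓ)))   -- neural activities φ_ℓ(t)
    (y : EuclideanSpace ℝ (Fin (d (N + 2))))          -- clamped target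
    (hclamp0 : ∀ t, φ t 0 = φ 0 0)                    -- input layer clamped
    (hclampL : ∀ t, φ t (N + 2) = y)                  -- output layer clamped to target
    (ε : ℕ → ∀ ℓ : ℕ, EuclideanSpace ℝ (Fin (d ℓ)))   -- prediction errors ε_ℓ(t)
    (hε : ∀ t ℓ, ℓ + 1 ≤ N + 2 → ε t (ℓ + 1) = φ t (ℓ + 1) - g ℓ (φ t ℓ))
    -- synchronous hidden activity update, 1 ≤ ℓ ≤ L − 1
    (hupdate : ∀ t ℓ, 1 ≤ ℓ → ℓ ≤ N + 1 →
      φ (t + 1) ℓ = φ t ℓ +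
        γ • ((ContinuousLinearMap.adjoint (J ℓ (φ t ℓ))) (ε t (ℓ + 1)) - ε t ℓ))
    -- forward initialization of the hidden layers
    (hinit : ∀ ℓ, ℓ + 1 ≤ N + 1 → φ 0 (ℓ + 1) = g ℓ (φ 0 ℓ)) :
    ∀ ℓ t, 1 ≤ ℓ → ℓ ≤ N + 1 → t < (N + 2) - ℓ →
      ε t ℓ = 0 ∧ φ t ℓ = φ 0 ℓ := by
  have key : ∀ t ℓ, 1 ≤ ℓ → ℓ ≤ N + 1 → t < (N + 2) - ℓ → φ t ℓ = φ 0 ℓ := by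
    intro t
    induction t with
    | zero => intro ℓ _ _ _; rfl
    | succ t ih =>
      intro ℓ h1 h2 ht
      have hℓN : ℓ ≤ N := by omega
      have hφℓ : φ t ℓ = φ 0 ℓ := ih ℓ h1 h2 (by omega)
      have hφℓ1 : φ t (ℓ + 1) = φ 0 (ℓ + 1) := ih (ℓ + 1) (by omega) (by omega) (by omega)
      have hεℓ1 : ε t (ℓ + 1) = 0 := by
        rw [hε t ℓ (by omega), hφℓ, hφℓ1, hinit ℓ (by omega), sub_self]
      have hεℓ : ε t ℓ = 0 := by
        obtain ⟨m, rfl⟩ : ∃ m, ℓ = m + 1 := ⟨ℓ - 1, by omega⟩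
        have hprev : φ t m = φ 0 m := by
          rcases Nat.eq_zero_or_pos m with h | h
          · subst h; exact hclamp0 t
          · exact ih m h (by omega) (by omega)
        rw [hε t m (by omega), hφℓ, hprev, hinit m (by omega), sub_self]
      rw [hupdate t ℓ h1 h2, hεℓ, hεℓ1, map_zero, sub_zero, smul_zero, add_zero, hφℓ]
  intro ℓ t h1 h2 ht
  obtain ⟨m, rfl⟩ : ∃ m, ℓ = m + 1 := ⟨ℓ - 1, by omega⟩
  have hφ := key t (m + 1) h1 h2 ht
  have hprev : φ t m = φ 0 m := by
    rcases Nat.eq_zero_or_pos m with h | h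
    · subst h; exact hclamp0 t
    · exact key t m h (by omega) (by omega)
  refine ⟨?_, hφ⟩
  rw [hε t m (by omega), hφ, hprev, hinit m (by omega), sub_self]
end

section
/- In a forward-initialized predictive coding network (as defined in the context), for every hidden layer ℓ with 1 ≤ ℓ ≤ L−1, at the arrival time t̂ = L−ℓ the prediction error equals the total displacement of the layer's activity from its initial value: ε_ℓ(L−ℓ) = φ_ℓ(L−ℓ) − φ_ℓ(0). -/
/-!
STATEMENT 1: In a forward-initialized predictive coding network with depth `L = N + 2`,
for every hidden layer `ℓ` with `1 ≤ ℓ ≤ L − 1`, at the arrival time `t̂ = L − ℓ` the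
prediction error equals the total displacement of the layer's activity from its initial
value: `ε_ℓ(L − ℓ) = φ_ℓ(L − ℓ) − φ_ℓ(0)`.
-/
theorem error_at_arrival_time_eq_displacement
    (N : ℕ)                                  -- network depth L = N + 2 (covers all L ≥ 2)
    (d : ℕ → ℕ)                              -- layer dimensions
    -- prediction maps g_ℓ : ℝ^{d_ℓ} → ℝ^{d_{ℓ+1}}
    (g : ∀ ℓ : ℕ, EuclideanSpace ℝ (Fin (d ℓ)) → EuclideanSpace ℝ (Fin (d (ℓ + 1))))
    -- Jacobian of g_ℓ at each point, as a continuous linear map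
    (J : ∀ ℓ : ℕ, EuclideanSpace ℝ (Fin (d ℓ)) →
      (EuclideanSpace ℝ (Fin (d ℓ)) →L[ℝ] EuclideanSpace ℝ (Fin (d (ℓ + 1)))))
    (hJ : ∀ ℓ x, HasFDerivAt (g ℓ) (J ℓ x) x)
    (γ : ℝ) (hγ : 0 < γ)                     -- neural activity learning rate
    (φ : ℕ → ∀ ℓ : ℕ, EuclideanSpace ℝ (Fin (d ℓ)))   -- neural activities φ_ℓ(t)
    (y : EuclideanSpace ℝ (Fin (d (N + 2))))          -- clamped target
    (hclamp0 : ∀ t, φ t 0 = φ 0 0)                    -- input layer clamped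
    (hclampL : ∀ t, φ t (N + 2) = y)                  -- output layer clamped to target
    (ε : ℕ → ∀ ℓ : ℕ, EuclideanSpace ℝ (Fin (d ℓ)))   -- prediction errors ε_ℓ(t)
    (hε : ∀ t ℓ, ℓ + 1 ≤ N + 2 → ε t (ℓ + 1) = φ t (ℓ + 1) - g ℓ (φ t ℓ))
    -- synchronous hidden activity update, 1 ≤ ℓ ≤ L − 1
    (hupdate : ∀ t ℓ, 1 ≤ ℓ → ℓ ≤ N + 1 →
      φ (t + 1) ℓ = φ t ℓ +
        γ • ((ContinuousLinearMap.adjoint (J ℓ (φ t ℓ))) (ε t (ℓ + 1)) - ε t ℓ))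
    -- forward initialization of the hidden layers
    (hinit : ∀ ℓ, ℓ + 1 ≤ N + 1 → φ 0 (ℓ + 1) = g ℓ (φ 0 ℓ)) :
    ∀ ℓ, 1 ≤ ℓ → ℓ ≤ N + 1 →
      ε ((N + 2) - ℓ) ℓ = φ ((N + 2) - ℓ) ℓ - φ 0 ℓ := by

  have key : ∀ t k, t + k ≤ N + 1 → φ t k = φ 0 k := by
    intro t
    induction t with
    | zero => intro k _; rfl
    | succ t ih =>
      intro k hk
      match k with
      | 0 => exact hclamp0 (t + 1)
      | m + 1 =>
        have hm2 : m + 2 ≤ N + 1 := by omega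
        have e1 : ε t (m + 1) = 0 := by
          rw [hε t m (by omega), ih (m + 1) (by omega), ih m (by omega),
            ← hinit m (by omega)]
          simp
        have e2 : ε t (m + 2) = 0 := by
          rw [hε t (m + 1) (by omega), ih (m + 2) (by omega), ih (m + 1) (by omega),
            ← hinit (m + 1) hm2]
          simp
        rw [hupdate t (m + 1) (by omega) (by omega), e1, e2]
        simp [ih (m + 1) (by omega)]
  intro ℓ h1 h2
  match ℓ, h1 with
  | m + 1, _ =>
    rw [hε _ m (by omega), key (N + 2 - (m + 1)) m (by omega),
      ← hinit m (by omega)]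
end

section
/- In a forward-initialized predictive coding network (as defined in the context), for every hidden layer ℓ with 1 ≤ ℓ ≤ L−1, the prediction error arriving at layer ℓ at time t̂ = L−ℓ satisfies the exact identity ε_ℓ(L−ℓ) = γ^{L−ℓ} · J_ℓᵀ J_{ℓ+1}ᵀ ⋯ J_{L−1}ᵀ · ε_L(0), where J_i = Dg_i(φ_i(0)) is the Jacobian of g_i evaluated at the initial activity of layer i, and ε_L(0) = y − g_{L−1}(φ_{L−1}(0)). -/
/-- The composition `T ℓ ∘ T (ℓ+1) ∘ ⋯ ∘ T (ℓ+k−1)` of a family of continuous linear maps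
`T i : ℝ^{d_{i+1}} →L ℝ^{d_i}` (in the application, `T i` is the transpose/adjoint `J_iᵀ`
of the Jacobian of the `i`-th prediction map). It maps `ℝ^{d_{ℓ+k}}` to `ℝ^{d_ℓ}`. -/
noncomputable def chainAdjoint (d : ℕ → ℕ)
    (T : ∀ i : ℕ, EuclideanSpace ℝ (Fin (d (i + 1))) →L[ℝ] EuclideanSpace ℝ (Fin (d i))) :
    ∀ ℓ k : ℕ, EuclideanSpace ℝ (Fin (d (ℓ + k))) →L[ℝ] EuclideanSpace ℝ (Fin (d ℓ))
  | _, 0 => ContinuousLinearMap.id ℝ _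
  | ℓ, k + 1 => (chainAdjoint d T ℓ k).comp (T (ℓ + k))


lemma chainAdjoint_left (d : ℕ → ℕ)
    (T : ∀ i : ℕ, EuclideanSpace ℝ (Fin (d (i + 1))) →L[ℝ] EuclideanSpace ℝ (Fin (d i))) :
    ∀ (k ℓ : ℕ) (v : EuclideanSpace ℝ (Fin (d (ℓ + (k + 1)))))
      (w : EuclideanSpace ℝ (Fin (d (ℓ + 1 + k)))), HEq v w →
      chainAdjoint d T ℓ (k + 1) v = T ℓ (chainAdjoint d T (ℓ + 1) k w) := by
  have key : ∀ a b : ℕ, a = b → ∀ (v : EuclideanSpace ℝ (Fin (d (a + 1))))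
      (w : EuclideanSpace ℝ (Fin (d (b + 1)))), HEq v w → HEq (T a v) (T b w) := by
    rintro a b rfl v w hvw
    rw [eq_of_heq hvw]
  intro k
  induction k with
  | zero =>
    intro ℓ v w h
    rw [eq_of_heq h]
    simp [chainAdjoint]
  | succ k ih =>
    intro ℓ v w h
    show chainAdjoint d T ℓ (k + 1) (T (ℓ + (k + 1)) v)
        = T ℓ (chainAdjoint d T (ℓ + 1) k (T (ℓ + 1 + k) w))
    exact ih ℓ _ _ (key (ℓ + (k + 1)) (ℓ + 1 + k) (by omega) v w h)

/-!
STATEMENT 3: In a forward-initialized predictive coding network with depth `L = N + 2`,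
for every hidden layer `ℓ` with `1 ≤ ℓ ≤ L − 1`, writing `k = L − ℓ ≥ 1` (i.e. `ℓ + k = L`),
the prediction error arriving at layer `ℓ` at time `t̂ = k` satisfies the exact identity
`ε_ℓ(L−ℓ) = γ^{L−ℓ} • (J_ℓᵀ J_{ℓ+1}ᵀ ⋯ J_{L−1}ᵀ) ε_L(0)`,
where `J_i = Dg_i(φ_i(0))` and `ε_L(0) = y − g_{L−1}(φ_{L−1}(0))`.
-/
theorem error_at_arrival_time_jacobian_chain
    (N : ℕ)                                  -- network depth L = N + 2 (covers all L ≥ 2)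
    (d : ℕ → ℕ)                              -- layer dimensions
    -- prediction maps g_ℓ : ℝ^{d_ℓ} → ℝ^{d_{ℓ+1}}
    (g : ∀ ℓ : ℕ, EuclideanSpace ℝ (Fin (d ℓ)) → EuclideanSpace ℝ (Fin (d (ℓ + 1))))
    -- Jacobian of g_ℓ at each point, as a continuous linear map
    (J : ∀ ℓ : ℕ, EuclideanSpace ℝ (Fin (d ℓ)) →
      (EuclideanSpace ℝ (Fin (d ℓ)) →L[ℝ] EuclideanSpace ℝ (Fin (d (ℓ + 1)))))
    (hJ : ∀ ℓ x, HasFDerivAt (g ℓ) (J ℓ x) x)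
    (γ : ℝ) (hγ : 0 < γ)                     -- neural activity learning rate
    (φ : ℕ → ∀ ℓ : ℕ, EuclideanSpace ℝ (Fin (d ℓ)))   -- neural activities φ_ℓ(t)
    (y : EuclideanSpace ℝ (Fin (d (N + 2))))          -- clamped target
    (hclamp0 : ∀ t, φ t 0 = φ 0 0)                    -- input layer clamped
    (hclampL : ∀ t, φ t (N + 2) = y)                  -- output layer clamped to target
    (ε : ℕ → ∀ ℓ : ℕ, EuclideanSpace ℝ (Fin (d ℓ)))   -- prediction errors ε_ℓ(t)
    (hε : ∀ t ℓ, ℓ + 1 ≤ N + 2 → ε t (ℓ + 1) = φ t (ℓ + 1) - g ℓ (φ t ℓ))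
    -- synchronous hidden activity update, 1 ≤ ℓ ≤ L − 1
    (hupdate : ∀ t ℓ, 1 ≤ ℓ → ℓ ≤ N + 1 →
      φ (t + 1) ℓ = φ t ℓ +
        γ • ((ContinuousLinearMap.adjoint (J ℓ (φ t ℓ))) (ε t (ℓ + 1)) - ε t ℓ))
    -- forward initialization of the hidden layers
    (hinit : ∀ ℓ, ℓ + 1 ≤ N + 1 → φ 0 (ℓ + 1) = g ℓ (φ 0 ℓ)) :
    (∀ ℓ k, 1 ≤ ℓ → 1 ≤ k → ℓ + k = N + 2 →
      ε k ℓ = γ ^ k •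
        (chainAdjoint d (fun i => ContinuousLinearMap.adjoint (J i (φ 0 i))) ℓ k)
          (ε 0 (ℓ + k))) ∧
    ε 0 (N + 2) = y - g (N + 1) (φ 0 (N + 1)) := by
  have hlast : ε 0 (N + 2) = y - g (N + 1) (φ 0 (N + 1)) := by
    rw [hε 0 (N + 1) le_rfl, hclampL 0]
  refine ⟨?_, hlast⟩
  have hstable : ∀ t ℓ, 1 ≤ ℓ → t + ℓ ≤ N + 1 → φ t ℓ = φ 0 ℓ := by
    intro t
    induction t with
    | zero => intro ℓ _ _; rfl
    | succ t ih =>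
      intro ℓ h1 h2
      have stable_at : ∀ m, t + m ≤ N + 1 → φ t m = φ 0 m := by
        intro m hm
        match m with
        | 0 => exact hclamp0 t
        | m + 1 => exact ih (m + 1) (Nat.succ_le_succ (Nat.zero_le m)) hm
      have εz : ∀ m, t + m + 1 ≤ N + 1 → ε t (m + 1) = 0 := by
        intro m hm
        rw [hε t m (by omega), stable_at (m + 1) (by omega), stable_at m (by omega),
          hinit m (by omega), sub_self]
      obtain ⟨m, rfl⟩ : ∃ m, ℓ = m + 1 := ⟨ℓ - 1, by omega⟩
      rw [hupdate t (m + 1) h1 (by omega), εz m (by omega), εz (m + 1) (by omega)]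
      simpa using ih (m + 1) h1 (by omega)
  have εzero : ∀ t m, t + m + 1 ≤ N + 1 → ε t (m + 1) = 0 := by
    intro t m hm
    have stable_at : ∀ j, t + j ≤ N + 1 → φ t j = φ 0 j := by
      intro j hj
      match j with
      | 0 => exact hclamp0 t
      | j + 1 => exact hstable t (j + 1) (by omega) hj
    rw [hε t m (by omega), stable_at (m + 1) (by omega), stable_at m (by omega),
      hinit m (by omega), sub_self]
  have hstep : ∀ k ℓ, 1 ≤ ℓ → ℓ + (k + 1) = N + 2 →
      ε (k + 1) ℓ = γ • (ContinuousLinearMap.adjoint (J ℓ (φ 0 ℓ))) (ε k (ℓ + 1)) := by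
    intro k ℓ h1 hsum
    obtain ⟨m, rfl⟩ : ∃ m, ℓ = m + 1 := ⟨ℓ - 1, by omega⟩
    have hφm : φ (k + 1) m = φ 0 m := by
      match m with
      | 0 => exact hclamp0 (k + 1)
      | j + 1 => exact hstable (k + 1) (j + 1) (by omega) (by omega)
    rw [hε (k + 1) m (by omega), hupdate k (m + 1) h1 (by omega), εzero k m (by omega),
      hφm, hstable k (m + 1) h1 (by omega), hinit m (by omega), sub_zero,
      add_sub_cancel_left]
  have main : ∀ k ℓ, 1 ≤ ℓ → ℓ + (k + 1) = N + 2 →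
      ε (k + 1) ℓ = γ ^ (k + 1) •
        (chainAdjoint d (fun i => ContinuousLinearMap.adjoint (J i (φ 0 i))) ℓ (k + 1))
          (ε 0 (ℓ + (k + 1))) := by
    intro k
    induction k with
    | zero =>
      intro ℓ h1 hsum
      rw [hstep 0 ℓ h1 hsum]
      simp [chainAdjoint]
    | succ k ih =>
      intro ℓ h1 hsum
      have hh : HEq (ε 0 (ℓ + (k + 1 + 1))) (ε 0 (ℓ + 1 + (k + 1))) := by
        rw [show ℓ + 1 + (k + 1) = ℓ + (k + 1 + 1) from by omega]
      rw [hstep (k + 1) ℓ h1 hsum, ih (ℓ + 1) (by omega) (by omega),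
        chainAdjoint_left d _ (k + 1) ℓ (ε 0 (ℓ + (k + 1 + 1))) (ε 0 (ℓ + 1 + (k + 1))) hh,
        map_smul, smul_smul]
      congr 1
      ring
  intro ℓ k h1 hk hsum
  obtain ⟨k', rfl⟩ : ∃ k', k = k' + 1 := ⟨k - 1, by omega⟩
  exact main k' ℓ h1 hsum
end

section
/- In a forward-initialized predictive coding network (as defined in the context), for every hidden layer ℓ with 1 ≤ ℓ ≤ L−1, the squared Euclidean norm of the prediction error arriving at layer ℓ at time t̂ = L−ℓ decays exponentially with distance from the output: ‖ε_ℓ(L−ℓ)‖₂² ≤ γ^{2(L−ℓ)} · ( ∏_{i=ℓ}^{L−1} ‖J_i‖² ) · ‖ε_L(0)‖₂², where J_i = Dg_i(φ_i(0)) is the Jacobian of g_i at the initial activity of layer i, ‖J_i‖ is its operator (spectral) norm, and ε_L(0) = y − g_{L−1}(φ_{L−1}(0)). -/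
/-!
STATEMENT 4: In a forward-initialized predictive coding network with depth `L = N + 2`,
for every hidden layer `ℓ` with `1 ≤ ℓ ≤ L − 1`, the squared Euclidean norm of the
prediction error arriving at layer `ℓ` at time `t̂ = L − ℓ` decays exponentially with the
distance from the output:
`‖ε_ℓ(L−ℓ)‖₂² ≤ γ^{2(L−ℓ)} · (∏_{i=ℓ}^{L−1} ‖J_i‖²) · ‖ε_L(0)‖₂²`,
where `J_i = Dg_i(φ_i(0))` and `‖J_i‖` is its operator (spectral) norm.
-/
theorem error_exponential_decay
    (N : ℕ)                                  -- network depth L = N + 2 (covers all L ≥ 2)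
    (d : ℕ → ℕ)                              -- layer dimensions
    -- prediction maps g_ℓ : ℝ^{d_ℓ} → ℝ^{d_{ℓ+1}}
    (g : ∀ ℓ : ℕ, EuclideanSpace ℝ (Fin (d ℓ)) → EuclideanSpace ℝ (Fin (d (ℓ + 1))))
    -- Jacobian of g_ℓ at each point, as a continuous linear map
    (J : ∀ ℓ : ℕ, EuclideanSpace ℝ (Fin (d ℓ)) →
      (EuclideanSpace ℝ (Fin (d ℓ)) →L[ℝ] EuclideanSpace ℝ (Fin (d (ℓ + 1)))))
    (hJ : ∀ ℓ x, HasFDerivAt (g ℓ) (J ℓ x) x)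
    (γ : ℝ) (hγ : 0 < γ)                     -- neural activity learning rate
    (φ : ℕ → ∀ ℓ : ℕ, EuclideanSpace ℝ (Fin (d ℓ)))   -- neural activities φ_ℓ(t)
    (y : EuclideanSpace ℝ (Fin (d (N + 2))))          -- clamped target
    (hclamp0 : ∀ t, φ t 0 = φ 0 0)                    -- input layer clamped
    (hclampL : ∀ t, φ t (N + 2) = y)                  -- output layer clamped to target
    (ε : ℕ → ∀ ℓ : ℕ, EuclideanSpace ℝ (Fin (d ℓ)))   -- prediction errors ε_ℓ(t)
    (hε : ∀ t ℓ, ℓ + 1 ≤ N + 2 → ε t (ℓ + 1) = φ t (ℓ + 1) - g ℓ (φ t ℓ))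
    -- synchronous hidden activity update, 1 ≤ ℓ ≤ L − 1
    (hupdate : ∀ t ℓ, 1 ≤ ℓ → ℓ ≤ N + 1 →
      φ (t + 1) ℓ = φ t ℓ +
        γ • ((ContinuousLinearMap.adjoint (J ℓ (φ t ℓ))) (ε t (ℓ + 1)) - ε t ℓ))
    -- forward initialization of the hidden layers
    (hinit : ∀ ℓ, ℓ + 1 ≤ N + 1 → φ 0 (ℓ + 1) = g ℓ (φ 0 ℓ)) :
    ∀ ℓ, 1 ≤ ℓ → ℓ ≤ N + 1 →
      ‖ε ((N + 2) - ℓ) ℓ‖ ^ 2 ≤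
        γ ^ (2 * ((N + 2) - ℓ)) *
          (∏ i ∈ Finset.Icc ℓ (N + 1), ‖J i (φ 0 i)‖ ^ 2) * ‖ε 0 (N + 2)‖ ^ 2 := by
  -- activities below the "front" stay at their initial values
  have key : ∀ t, ∀ k, 1 ≤ k → t + k ≤ N + 1 → φ t k = φ 0 k := by
    intro t
    induction t with
    | zero => intro k _ _; rfl
    | succ t ih =>
      have hz : ∀ k, 1 ≤ k → t + k ≤ N + 1 → ε t k = 0 := by
        intro k hk hk2
        obtain ⟨m, rfl⟩ : ∃ m, k = m + 1 := ⟨k - 1, by omega⟩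
        rw [hε t m (by omega), ih (m + 1) (by omega) (by omega)]
        have hm : φ t m = φ 0 m := by
          rcases Nat.eq_zero_or_pos m with h0 | h0
          · subst h0; exact hclamp0 t
          · exact ih m h0 (by omega)
        rw [hm, ← hinit m (by omega), sub_self]
      intro k hk hk2
      rw [hupdate t k hk (by omega), hz k hk (by omega),
        hz (k + 1) (by omega) (by omega)]
      simp [ih k hk (by omega)]
  have hεz : ∀ t k, 1 ≤ k → t + k ≤ N + 1 → ε t k = 0 := by
    intro t k hk hk2
    obtain ⟨m, rfl⟩ : ∃ m, k = m + 1 := ⟨k - 1, by omega⟩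
    rw [hε t m (by omega), key t (m + 1) (by omega) (by omega)]
    have hm : φ t m = φ 0 m := by
      rcases Nat.eq_zero_or_pos m with h0 | h0
      · subst h0; exact hclamp0 t
      · exact key t m h0 (by omega)
    rw [hm, ← hinit m (by omega), sub_self]
  -- one step of error propagation
  have hstep : ∀ ℓ, 1 ≤ ℓ → ℓ ≤ N + 1 →
      ε (N + 2 - ℓ) ℓ =
        γ • (ContinuousLinearMap.adjoint (J ℓ (φ 0 ℓ))) (ε (N + 1 - ℓ) (ℓ + 1)) := by
    intro ℓ h1 h2
    set t := N + 1 - ℓ with ht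
    have ht2 : N + 2 - ℓ = t + 1 := by omega
    rw [ht2]
    obtain ⟨m, rfl⟩ : ∃ m, ℓ = m + 1 := ⟨ℓ - 1, by omega⟩
    have hφm : φ (t + 1) m = φ 0 m := by
      rcases Nat.eq_zero_or_pos m with h0 | h0
      · subst h0; exact hclamp0 (t + 1)
      · exact key (t + 1) m h0 (by omega)
    rw [hε (t + 1) m (by omega), hupdate t (m + 1) (by omega) (by omega),
      key t (m + 1) (by omega) (by omega), hεz t (m + 1) (by omega) (by omega),
      hφm, ← hinit m (by omega), sub_zero]
    exact add_sub_cancel_left _ _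
  -- chained norm bound
  have chain : ∀ j, j ≤ N →
      ‖ε (j + 1) (N + 1 - j)‖ ≤
        γ ^ (j + 1) * (∏ i ∈ Finset.Icc (N + 1 - j) (N + 1), ‖J i (φ 0 i)‖) *
          ‖ε 0 (N + 2)‖ := by
    have hnorm : ∀ ℓ (x : EuclideanSpace ℝ (Fin (d (ℓ + 1)))),
        ‖γ • (ContinuousLinearMap.adjoint (J ℓ (φ 0 ℓ))) x‖ ≤
          γ * (‖J ℓ (φ 0 ℓ)‖ * ‖x‖) := by
      intro ℓ x
      rw [norm_smul, Real.norm_eq_abs, abs_of_pos hγ]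
      refine mul_le_mul_of_nonneg_left ?_ hγ.le
      calc ‖(ContinuousLinearMap.adjoint (J ℓ (φ 0 ℓ))) x‖
          ≤ ‖ContinuousLinearMap.adjoint (J ℓ (φ 0 ℓ))‖ * ‖x‖ :=
            ContinuousLinearMap.le_opNorm _ _
        _ = ‖J ℓ (φ 0 ℓ)‖ * ‖x‖ := by
            rw [ContinuousLinearMap.adjoint.norm_map]
    intro j
    induction j with
    | zero =>
      intro _
      have h := hstep (N + 1) (by omega) le_rfl
      simp only [show N + 2 - (N + 1) = 1 from by omega,
        show N + 1 - (N + 1) = 0 from by omega] at h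
      rw [show N + 1 - 0 = N + 1 from rfl, Finset.Icc_self, Finset.prod_singleton, h,
        pow_one]
      exact (hnorm (N + 1) _).trans_eq (by ring)
    | succ j ihj =>
      intro hjN
      have ih := ihj (by omega)
      set ℓ := N + 1 - (j + 1) with hℓ
      clear_value ℓ
      have h := hstep ℓ (by omega) (by omega)
      rw [show N + 2 - ℓ = j + 2 from by omega, show N + 1 - ℓ = j + 1 from by omega] at h
      rw [show N + 1 - j = ℓ + 1 from by omega] at ih
      calc ‖ε (j + 1 + 1) ℓ‖
          = ‖γ • (ContinuousLinearMap.adjoint (J ℓ (φ 0 ℓ))) (ε (j + 1) (ℓ + 1))‖ :=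
            congrArg norm h
        _ ≤ γ * (‖J ℓ (φ 0 ℓ)‖ * ‖ε (j + 1) (ℓ + 1)‖) := hnorm ℓ _
        _ ≤ γ * (‖J ℓ (φ 0 ℓ)‖ *
              (γ ^ (j + 1) * (∏ i ∈ Finset.Icc (ℓ + 1) (N + 1), ‖J i (φ 0 i)‖) *
                ‖ε 0 (N + 2)‖)) := by
            refine mul_le_mul_of_nonneg_left
              (mul_le_mul_of_nonneg_left ?_ (norm_nonneg _)) hγ.le
            exact ih.trans_eq (by ring)
        _ = γ ^ (j + 1 + 1) *
              (∏ i ∈ Finset.Icc ℓ (N + 1), ‖J i (φ 0 i)‖) * ‖ε 0 (N + 2)‖ := by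
            have hins : (∏ i ∈ Finset.Icc ℓ (N + 1), ‖J i (φ 0 i)‖) =
                ‖J ℓ (φ 0 ℓ)‖ * ∏ i ∈ Finset.Icc (ℓ + 1) (N + 1), ‖J i (φ 0 i)‖ := by
              rw [← Finset.mul_prod_erase _ _ (Finset.mem_Icc.2 ⟨le_rfl, by omega⟩),
                Finset.Icc_erase_left, Finset.Icc_add_one_left_eq_Ioc]
            rw [hins]; ring
  -- conclude
  intro ℓ h1 h2
  have hj := chain (N + 1 - ℓ) (by omega)
  rw [show N + 1 - (N + 1 - ℓ) = ℓ from by omega,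
    show N + 1 - ℓ + 1 = N + 2 - ℓ from by omega] at hj
  have hrhs : (0:ℝ) ≤ γ ^ (N + 2 - ℓ) * (∏ i ∈ Finset.Icc ℓ (N + 1), ‖J i (φ 0 i)‖) *
      ‖ε 0 (N + 2)‖ :=
    mul_nonneg (mul_nonneg (pow_nonneg hγ.le _)
      (Finset.prod_nonneg fun i _ => norm_nonneg _)) (norm_nonneg _)
  have hsq := pow_le_pow_left₀ (norm_nonneg _) hj 2
  calc ‖ε (N + 2 - ℓ) ℓ‖ ^ 2
      ≤ (γ ^ (N + 2 - ℓ) * (∏ i ∈ Finset.Icc ℓ (N + 1), ‖J i (φ 0 i)‖) *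
          ‖ε 0 (N + 2)‖) ^ 2 := hsq
    _ = γ ^ (2 * (N + 2 - ℓ)) *
          (∏ i ∈ Finset.Icc ℓ (N + 1), ‖J i (φ 0 i)‖ ^ 2) * ‖ε 0 (N + 2)‖ ^ 2 := by
        rw [mul_pow, mul_pow, ← pow_mul, ← Finset.prod_pow, mul_comm (N + 2 - ℓ) 2]
end

section
/- Under the Kolen–Pollack last-layer updates with weight decay (as defined in the context), the mismatch matrix satisfies the closed-form expression Ω(t) = (1 − α)ᵗ Ω(0) for every t ∈ ℕ, i.e., Θ(t) − Ψ(t)ᵀ = (1 − α)ᵗ ( Θ(0) − Ψ(0)ᵀ ). -/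
open Matrix

/-!
STATEMENT 6: Under the Kolen–Pollack last-layer updates with weight decay
`Θ(t+1) = Θ(t) − α(δ(t) x(t)ᵀ + Θ(t))` and `Ψ(t+1) = Ψ(t) − α(x(t) δ(t)ᵀ + Ψ(t))`,
the mismatch matrix satisfies the closed form
`Θ(t) − Ψ(t)ᵀ = (1 − α)ᵗ (Θ(0) − Ψ(0)ᵀ)` for every `t ∈ ℕ`.
-/
theorem kp_mismatch_closed_form
    (m n : ℕ) (α : ℝ)
    (x : ℕ → Fin n → ℝ) (δ : ℕ → Fin m → ℝ)
    (Θ : ℕ → Matrix (Fin m) (Fin n) ℝ) (Ψ : ℕ → Matrix (Fin n) (Fin m) ℝ)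
    (hΘ : ∀ t, Θ (t + 1) = Θ t - α • (vecMulVec (δ t) (x t) + Θ t))
    (hΨ : ∀ t, Ψ (t + 1) = Ψ t - α • (vecMulVec (x t) (δ t) + Ψ t)) :
    ∀ t, Θ t - (Ψ t)ᵀ = (1 - α) ^ t • (Θ 0 - (Ψ 0)ᵀ) := by
  intro t
  induction t with
  | zero => simp
  | succ t ih =>
    have key : Θ (t+1) - (Ψ (t+1))ᵀ = (1-α) • (Θ t - (Ψ t)ᵀ) := by
      rw [hΘ, hΨ]
      ext i j
      simp [vecMulVec, Matrix.sub_apply, Matrix.add_apply, Matrix.smul_apply,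
        Matrix.transpose_apply, mul_comm]
      ring
    rw [key, ih, smul_smul, ← pow_succ']
end

section
/- Under the Kolen–Pollack last-layer updates with weight decay (as defined in the context), if the learning rate satisfies 0 < α < 1, then the transposed feedback matrix converges to the forward matrix: Θ(t) − Ψ(t)ᵀ → 0 as t → ∞ (convergence of the mismatch matrix to the zero matrix in ℝ^{m×n}). -/
open Matrix Filter

/-!
STATEMENT 7: Under the Kolen–Pollack last-layer updates with weight decay
`Θ(t+1) = Θ(t) − α(δ(t) x(t)ᵀ + Θ(t))` and `Ψ(t+1) = Ψ(t) − α(x(t) δ(t)ᵀ + Ψ(t))`,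
if `0 < α < 1` then the transposed feedback matrix converges to the forward matrix:
the mismatch `Θ(t) − Ψ(t)ᵀ` tends to the zero matrix as `t → ∞`.
-/
theorem kp_feedback_converges_to_forward
    (m n : ℕ) (α : ℝ) (hα0 : 0 < α) (hα1 : α < 1)
    (x : ℕ → Fin n → ℝ) (δ : ℕ → Fin m → ℝ)
    (Θ : ℕ → Matrix (Fin m) (Fin n) ℝ) (Ψ : ℕ → Matrix (Fin n) (Fin m) ℝ)
    (hΘ : ∀ t, Θ (t + 1) = Θ t - α • (vecMulVec (δ t) (x t) + Θ t))
    (hΨ : ∀ t, Ψ (t + 1) = Ψ t - α • (vecMulVec (x t) (δ t) + Ψ t)) :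
    Tendsto (fun t => Θ t - (Ψ t)ᵀ) atTop (nhds 0) := by
  have key : ∀ t, Θ t - (Ψ t)ᵀ = (1 - α) ^ t • (Θ 0 - (Ψ 0)ᵀ) := by
    intro t
    induction t with
    | zero => simp
    | succ t ih =>
        rw [hΘ t, hΨ t, pow_succ]
        rw [transpose_sub, transpose_smul, transpose_add]
        have step : Θ t - α • (vecMulVec (δ t) (x t) + Θ t) -
            ((Ψ t)ᵀ - α • ((vecMulVec (x t) (δ t))ᵀ + (Ψ t)ᵀ)) =
            (1 - α) • (Θ t - (Ψ t)ᵀ) := by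
          ext i j
          simp [Matrix.sub_apply, Matrix.add_apply, Matrix.smul_apply, vecMulVec_apply,
            Matrix.transpose_apply]
          ring
        rw [step, ih, smul_smul, mul_comm]
  have hlim : Tendsto (fun t : ℕ => (1 - α) ^ t • (Θ 0 - (Ψ 0)ᵀ)) atTop
      (nhds ((0 : ℝ) • (Θ 0 - (Ψ 0)ᵀ))) := by
    apply Tendsto.smul_const
    exact tendsto_pow_atTop_nhds_zero_of_abs_lt_one (by rw [abs_lt]; constructor <;> linarith)
  rw [zero_smul] at hlim
  exact (tendsto_congr fun t => (key t)).mpr hlim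
end

section
/- Under the Kolen–Pollack last-layer updates with weight decay (as defined in the context), assume 0 < α < 1 and that the data sequences are bounded: there exist constants C, C′ ≥ 0 with ‖δ(t)‖₂ ≤ C and ‖u(t)‖₂ ≤ C′ for all t, where u : ℕ → ℝ^p is an arbitrary bounded sequence (the activity of an earlier layer). Then the difference between the DKP weight update for the earlier layer and the backpropagation weight update vanishes asymptotically: ‖ Ψ(t) δ(t) u(t)ᵀ − Θ(t)ᵀ δ(t) u(t)ᵀ ‖ ≤ ‖Ω(t)‖ · C · C′ → 0 as t → ∞, where ‖·‖ on matrices denotes the operator norm and Ω(t) = Θ(t) − Ψ(t)ᵀ. -/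
open Matrix Filter
open scoped Matrix.Norms.L2Operator   -- ‖·‖ on matrices is the ℓ²→ℓ² operator (spectral) norm

lemma vecMulVec_norm_le {k q : ℕ} (a : EuclideanSpace ℝ (Fin k))
    (b : EuclideanSpace ℝ (Fin q)) :
    ‖vecMulVec (a : Fin k → ℝ) (b : Fin q → ℝ)‖ ≤ ‖a‖ * ‖b‖ := by
  rw [Matrix.l2_opNorm_def]
  refine ContinuousLinearMap.opNorm_le_bound _ (by positivity) fun v => ?_
  have happ :
      (Matrix.toEuclideanLin (vecMulVec (a : Fin k → ℝ) (b : Fin q → ℝ))) v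
        = (∑ i, b i * v i) • a := by
    apply (WithLp.equiv 2 _).injective
    ext i
    simp [Matrix.toEuclideanLin_apply, Matrix.mulVec, Matrix.vecMulVec_apply,
      dotProduct, Finset.mul_sum, mul_assoc]
    rw [Finset.sum_mul]
    exact Finset.sum_congr rfl fun _ _ => by ring
  have hb : |∑ i, b i * v i| ≤ ‖b‖ * ‖v‖ := by
    have h := abs_real_inner_le_norm b v
    simpa [PiLp.inner_apply, mul_comm] using h
  calc ‖(Matrix.toEuclideanLin (vecMulVec (a : Fin k → ℝ) (b : Fin q → ℝ))) v‖
      = |∑ i, b i * v i| * ‖a‖ := by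
        rw [happ, norm_smul, Real.norm_eq_abs]
    _ ≤ (‖b‖ * ‖v‖) * ‖a‖ := mul_le_mul_of_nonneg_right hb (norm_nonneg _)
    _ = ‖a‖ * ‖b‖ * ‖v‖ := by ring

theorem dkp_update_converges_to_bp_update
    (m n p : ℕ) (α : ℝ) (hα0 : 0 < α) (hα1 : α < 1)
    (x : ℕ → Fin n → ℝ)
    (δ : ℕ → EuclideanSpace ℝ (Fin m))
    (u : ℕ → EuclideanSpace ℝ (Fin p))
    (Θ : ℕ → Matrix (Fin m) (Fin n) ℝ) (Ψ : ℕ → Matrix (Fin n) (Fin m) ℝ)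
    (hΘ : ∀ t, Θ (t + 1) = Θ t - α • (vecMulVec (δ t) (x t) + Θ t))
    (hΨ : ∀ t, Ψ (t + 1) = Ψ t - α • (vecMulVec (x t) (δ t) + Ψ t))
    (C C' : ℝ) (hC : 0 ≤ C) (hC' : 0 ≤ C')
    (hδ : ∀ t, ‖δ t‖ ≤ C) (hu : ∀ t, ‖u t‖ ≤ C') :
    (∀ t, ‖vecMulVec ((Ψ t).mulVec (δ t)) (u t) -
            vecMulVec (((Θ t)ᵀ).mulVec (δ t)) (u t)‖ ≤
          ‖Θ t - (Ψ t)ᵀ‖ * C * C') ∧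
    Tendsto
      (fun t => ‖vecMulVec ((Ψ t).mulVec (δ t)) (u t) -
                  vecMulVec (((Θ t)ᵀ).mulVec (δ t)) (u t)‖)
      atTop (nhds 0) := by
  have hdiff : ∀ t,
      vecMulVec ((Ψ t).mulVec (δ t)) (u t) -
        vecMulVec (((Θ t)ᵀ).mulVec (δ t)) (u t)
      = vecMulVec (((Ψ t) - (Θ t)ᵀ).mulVec (δ t)) (u t) := by
    intro t
    ext i j
    simp [Matrix.vecMulVec_apply, Matrix.sub_mulVec, sub_mul]
  have hbound : ∀ t,
      ‖vecMulVec ((Ψ t).mulVec (δ t)) (u t) -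
        vecMulVec (((Θ t)ᵀ).mulVec (δ t)) (u t)‖ ≤
      ‖Θ t - (Ψ t)ᵀ‖ * ‖δ t‖ * ‖u t‖ := by
    intro t
    rw [hdiff t]
    set v : EuclideanSpace ℝ (Fin n) :=
      (EuclideanSpace.equiv (Fin n) ℝ).symm (((Ψ t) - (Θ t)ᵀ).mulVec (δ t)) with hv
    have h1 : ‖vecMulVec (((Ψ t) - (Θ t)ᵀ).mulVec (δ t)) ((u t : Fin p → ℝ))‖
        ≤ ‖v‖ * ‖u t‖ := vecMulVec_norm_le v (u t)
    have h2 : ‖v‖ ≤ ‖(Ψ t) - (Θ t)ᵀ‖ * ‖δ t‖ :=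
      Matrix.l2_opNorm_mulVec ((Ψ t) - (Θ t)ᵀ) (δ t)
    have heq : ‖(Ψ t) - (Θ t)ᵀ‖ = ‖Θ t - (Ψ t)ᵀ‖ := by
      have hne : (Ψ t) - (Θ t)ᵀ = -(((Θ t) - (Ψ t)ᵀ)ᴴ) := by
        ext i j
        simp [Matrix.conjTranspose_apply, Matrix.sub_apply]
      rw [hne, norm_neg, Matrix.l2_opNorm_conjTranspose]
    calc ‖vecMulVec (((Ψ t) - (Θ t)ᵀ).mulVec (δ t)) ((u t : Fin p → ℝ))‖
        ≤ ‖v‖ * ‖u t‖ := h1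
      _ ≤ (‖(Ψ t) - (Θ t)ᵀ‖ * ‖δ t‖) * ‖u t‖ :=
          mul_le_mul_of_nonneg_right h2 (norm_nonneg _)
      _ = ‖Θ t - (Ψ t)ᵀ‖ * ‖δ t‖ * ‖u t‖ := by rw [heq]
  have hΩnn : ∀ t, (0:ℝ) ≤ ‖Θ t - (Ψ t)ᵀ‖ := fun t => norm_nonneg _
  have hCC : ∀ t,
      ‖vecMulVec ((Ψ t).mulVec (δ t)) (u t) -
        vecMulVec (((Θ t)ᵀ).mulVec (δ t)) (u t)‖ ≤
      ‖Θ t - (Ψ t)ᵀ‖ * C * C' := by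
    intro t
    refine (hbound t).trans ?_
    have h1 : ‖Θ t - (Ψ t)ᵀ‖ * ‖δ t‖ ≤ ‖Θ t - (Ψ t)ᵀ‖ * C :=
      mul_le_mul_of_nonneg_left (hδ t) (hΩnn t)
    calc ‖Θ t - (Ψ t)ᵀ‖ * ‖δ t‖ * ‖u t‖
        ≤ (‖Θ t - (Ψ t)ᵀ‖ * C) * ‖u t‖ :=
          mul_le_mul_of_nonneg_right h1 (norm_nonneg _)
      _ ≤ (‖Θ t - (Ψ t)ᵀ‖ * C) * C' :=
          mul_le_mul_of_nonneg_left (hu t) (by positivity)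
  refine ⟨hCC, ?_⟩
  have hΩ : ∀ t, Θ t - (Ψ t)ᵀ = (1 - α) ^ t • (Θ 0 - (Ψ 0)ᵀ) := by
    intro t
    induction t with
    | zero => simp
    | succ t ih =>
      rw [hΘ t, hΨ t]
      have hstep : Θ t - α • (vecMulVec (δ t) (x t) + Θ t) -
          (Ψ t - α • (vecMulVec (x t) (δ t) + Ψ t))ᵀ
          = (1 - α) • (Θ t - (Ψ t)ᵀ) := by
        ext i j
        simp [Matrix.sub_apply, Matrix.smul_apply, Matrix.transpose_apply,
          Matrix.add_apply, Matrix.vecMulVec_apply]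
        ring
      rw [hstep, ih, smul_smul, pow_succ, mul_comm]
  have hΩnorm : ∀ t, ‖Θ t - (Ψ t)ᵀ‖ = (1 - α) ^ t * ‖Θ 0 - (Ψ 0)ᵀ‖ := by
    intro t
    rw [hΩ t, norm_smul, Real.norm_eq_abs, abs_pow,
      abs_of_nonneg (by linarith : (0:ℝ) ≤ 1 - α)]
  have htend : Tendsto (fun t => ‖Θ t - (Ψ t)ᵀ‖ * C * C') atTop (nhds 0) := by
    have h0 : Tendsto (fun t : ℕ => (1 - α) ^ t) atTop (nhds 0) :=
      tendsto_pow_atTop_nhds_zero_of_lt_one (by linarith) (by linarith)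
    have h1 := ((h0.mul_const ‖Θ 0 - (Ψ 0)ᵀ‖).mul_const C).mul_const C'
    have hfun : (fun t => ‖Θ t - (Ψ t)ᵀ‖ * C * C')
        = fun t : ℕ => (1 - α) ^ t * ‖Θ 0 - (Ψ 0)ᵀ‖ * C * C' := by
      funext t; rw [hΩnorm t]
    rw [hfun]
    simpa using h1
  exact squeeze_zero (fun t => norm_nonneg _) hCC htend
end

section
/- In the linear setting of the context, suppose the unperturbed errors vanish (ε_ℓ = 0 and ε_{ℓ+1} = 0, as after forward initialization) and the weight perturbations are the DKP updates ΔΘ_ℓ = −α Ψ_{ℓ+1} δ_L φ_ℓᵀ and ΔΘ_{ℓ−1} = −α Ψ_ℓ δ_L φ_{ℓ−1}ᵀ, where Ψ_ℓ ∈ ℝ^{d_ℓ×d_L}, Ψ_{ℓ+1} ∈ ℝ^{d_{ℓ+1}×d_L} are feedback matrices, δ_L ∈ ℝ^{d_L} is the output error, and α > 0 a learning rate. Then the DKP-PC single-step neural activity update decomposes into an alignment term and a regularization term: Δφ̃_ℓ = αγ ( ‖φ_ℓ‖₂² Θ_ℓᵀ Ψ_{ℓ+1} δ_L − ‖φ_{ℓ−1}‖₂²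 Ψ_ℓ δ_L ) − α²γ ‖φ_ℓ‖₂² ‖Ψ_{ℓ+1} δ_L‖₂² φ_ℓ. -/
open Matrix

/-- Reinterpret a plain vector `Fin n → ℝ` as an element of Euclidean space
(`PiLp 2`), so that `‖·‖` is the Euclidean (ℓ²) norm. -/
noncomputable def toE {n : ℕ} (v : Fin n → ℝ) : EuclideanSpace ℝ (Fin n) :=
  (EuclideanSpace.equiv (Fin n) ℝ).symm v

@[simp] lemma toE_apply {n : ℕ} (v : Fin n → ℝ) (i : Fin n) : toE v i = v i := rfl

lemma norm_toE_sq {n : ℕ} (v : Fin n → ℝ) : ‖toE v‖ ^ 2 = v ⬝ᵥ v := by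
  rw [EuclideanSpace.norm_eq, Real.sq_sqrt (by positivity)]
  simp [dotProduct, sq]

lemma norm_E_sq {n : ℕ} (x : EuclideanSpace ℝ (Fin n)) :
    ‖x‖ ^ 2 = (x : Fin n → ℝ) ⬝ᵥ (x : Fin n → ℝ) := norm_toE_sq _

lemma vecMulVec_mulVec' {m n : ℕ} (u : Fin m → ℝ) (v w : Fin n → ℝ) :
    (vecMulVec u v).mulVec w = (v ⬝ᵥ w) • u := by
  funext i
  simp only [vecMulVec, mulVec, dotProduct, of_apply, Pi.smul_apply, smul_eq_mul,
    Finset.sum_mul]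
  exact Finset.sum_congr rfl fun j _ => by ring

/-!
STATEMENT 14: In the linear predictive coding setting, suppose the unperturbed errors
vanish (`ε_ℓ = 0`, `ε_{ℓ+1} = 0`, as after forward initialization) and the weight
perturbations are the DKP updates `ΔΘ_ℓ = −α Ψ_{ℓ+1} δ_L φ_ℓᵀ` and
`ΔΘ_{ℓ−1} = −α Ψ_ℓ δ_L φ_{ℓ−1}ᵀ`. Then the DKP-PC single-step neural activity update
`Δφ̃_ℓ = γ (Θ̃_ℓᵀ ε̃_{ℓ+1} − ε̃_ℓ)` decomposes into an alignment and a regularization term: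
`Δφ̃_ℓ = αγ (‖φ_ℓ‖₂² Θ_ℓᵀ Ψ_{ℓ+1} δ_L − ‖φ_{ℓ−1}‖₂² Ψ_ℓ δ_L)
          − α²γ ‖φ_ℓ‖₂² ‖Ψ_{ℓ+1} δ_L‖₂² φ_ℓ`.
-/
theorem dkp_pc_alignment_regularization_decomposition
    (dprev dcur dnext dout : ℕ) (α γ : ℝ) (hα : 0 < α) (hγ : 0 < γ)
    (φprev : EuclideanSpace ℝ (Fin dprev)) (φcur : EuclideanSpace ℝ (Fin dcur))
    (φnext : EuclideanSpace ℝ (Fin dnext))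
    (δL : EuclideanSpace ℝ (Fin dout))                      -- output error δ_L
    (Θprev : Matrix (Fin dcur) (Fin dprev) ℝ) (Θcur : Matrix (Fin dnext) (Fin dcur) ℝ)
    (Ψcur : Matrix (Fin dcur) (Fin dout) ℝ) (Ψnext : Matrix (Fin dnext) (Fin dout) ℝ)
    (ΔΘprev : Matrix (Fin dcur) (Fin dprev) ℝ) (ΔΘcur : Matrix (Fin dnext) (Fin dcur) ℝ)
    -- DKP weight perturbations
    (hΔΘcur : ΔΘcur = (-α) • vecMulVec (Ψnext.mulVec δL) φcur)
    (hΔΘprev : ΔΘprev = (-α) • vecMulVec (Ψcur.mulVec δL) φprev)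
    -- perturbed weights
    (Θtprev : Matrix (Fin dcur) (Fin dprev) ℝ) (hΘtprev : Θtprev = Θprev + ΔΘprev)
    (Θtcur : Matrix (Fin dnext) (Fin dcur) ℝ) (hΘtcur : Θtcur = Θcur + ΔΘcur)
    -- unperturbed errors vanish (forward initialization)
    (hεcur : φcur - toE (Θprev.mulVec φprev) = 0)
    (hεnext : φnext - toE (Θcur.mulVec φcur) = 0)
    -- perturbed errors
    (εtcur : EuclideanSpace ℝ (Fin dcur)) (hεtcur : εtcur = φcur - toE (Θtprev.mulVec φprev))
    (εtnext : EuclideanSpace ℝ (Fin dnext)) (hεtnext : εtnext = φnext - toE (Θtcur.mulVec φcur))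
    -- DKP-PC single-step neural activity update
    (Δφ : EuclideanSpace ℝ (Fin dcur))
    (hΔφ : Δφ = γ • (toE (Θtcurᵀ.mulVec εtnext) - εtcur)) :
    Δφ = (α * γ) • (‖φcur‖ ^ 2 • toE (Θcurᵀ.mulVec (Ψnext.mulVec δL)) -
            ‖φprev‖ ^ 2 • toE (Ψcur.mulVec δL)) -
          (α ^ 2 * γ * ‖φcur‖ ^ 2 * ‖toE (Ψnext.mulVec δL)‖ ^ 2) • φcur := by
  set p := Ψcur.mulVec δL with hp
  set q := Ψnext.mulVec δL with hq
  set a := (φprev : Fin dprev → ℝ) ⬝ᵥ (φprev : Fin dprev → ℝ) with ha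
  set b := (φcur : Fin dcur → ℝ) ⬝ᵥ (φcur : Fin dcur → ℝ) with hb
  have h1 : εtcur = (α * a) • toE p := by
    rw [hεtcur, hΘtprev, hΔΘprev, Matrix.add_mulVec, Matrix.smul_mulVec,
      vecMulVec_mulVec']
    have e : toE (Θprev.mulVec φprev + (-α) • (φprev ⬝ᵥ (φprev : Fin dprev → ℝ)) • p)
        = toE (Θprev.mulVec φprev) + ((-α) * a) • toE p := by
      rw [← ha]; ext i
      show Θprev.mulVec φprev i + (-α) * (a * p i)
        = Θprev.mulVec φprev i + (-α * a) * p i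
      ring
    rw [e]
    have := hεcur
    rw [sub_eq_zero] at this
    rw [this]
    module
  have h2 : εtnext = (α * b) • toE q := by
    rw [hεtnext, hΘtcur, hΔΘcur, Matrix.add_mulVec, Matrix.smul_mulVec,
      vecMulVec_mulVec']
    have e : toE (Θcur.mulVec φcur + (-α) • (φcur ⬝ᵥ (φcur : Fin dcur → ℝ)) • q)
        = toE (Θcur.mulVec φcur) + ((-α) * b) • toE q := by
      rw [← hb]; ext i
      show Θcur.mulVec φcur i + (-α) * (b * q i)
        = Θcur.mulVec φcur i + (-α * b) * q i
      ring
    rw [e]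
    have := hεnext
    rw [sub_eq_zero] at this
    rw [this]
    module
  have h3 : toE (Θtcurᵀ.mulVec εtnext)
      = (α * b) • toE (Θcurᵀ.mulVec q) - (α ^ 2 * b * (q ⬝ᵥ q)) • φcur := by
    rw [h2, hΘtcur, hΔΘcur]
    have e1 : (Θcur + (-α) • vecMulVec q (φcur : Fin dcur → ℝ))ᵀ
        = Θcurᵀ + (-α) • vecMulVec (φcur : Fin dcur → ℝ) q := by
      rw [transpose_add, transpose_smul]
      congr 1
      ext i j
      simp [vecMulVec, mul_comm]
    have e0 : (Θcur + (-α) • vecMulVec q (φcur : Fin dcur → ℝ))ᵀ.mulVec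
        ((α * b) • toE q : EuclideanSpace ℝ (Fin dnext))
        = (Θcur + (-α) • vecMulVec q (φcur : Fin dcur → ℝ))ᵀ.mulVec ((α * b) • q) := rfl
    rw [e0, e1, Matrix.add_mulVec, Matrix.smul_mulVec,
      Matrix.mulVec_smul, Matrix.mulVec_smul, vecMulVec_mulVec']
    ext i
    simp only [toE_apply, Pi.add_apply, Pi.smul_apply, Pi.sub_apply, PiLp.add_apply,
      PiLp.smul_apply, PiLp.sub_apply, smul_eq_mul, dotProduct_smul, smul_dotProduct]
    ring
  rw [hΔφ, h3, h1, norm_E_sq φcur, norm_E_sq φprev, norm_toE_sq, ← ha, ← hb]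
  module
end
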